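/- Let Y be a Poisson random variable with mean M ≥ 1 and let H_n denote the n-th harmonic number. Then |E H_Y − H_M| ≤ C·M^{−1/2} for an absolute constant C (e.g. C = 1 + √17 works); consequently E H_Y = log M + γ + O(M^{−1/2}) as M → ∞ (M an integer), where γ is the Euler–Mascheroni constant. -/

import Mathlib

/-!
With `p` the Poisson weights of mean `M`, the bound `|H_k - H_M| ≤ |k - M|/M + |M - k|/(k + 1)`
and Cauchy–Schwarz against `p` give
`|E H_Y - H_M| ≤ √E[(Y - M)²/M²] + √E[(M - Y)²/(Y + 1)²]`.
The first expectation is the variance over `M²`, i.e. `1/M`. For the second, the recursion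
`M² p(k) = (k + 1)(k + 2) p(k + 2)` turns `(M - k)²/(k + 1)²` into at most twice a shifted second
moment, which gives `2(M + 4)/M² ≤ 17/M`. The asymptotic form then follows from
`0 < H_M - log M - γ < log (1 + 1/M) ≤ 1/M`.
-/

/-- The `n`-th harmonic number `H_n = ∑_{i=1}^n 1/i` (with `H_0 = 0`). -/
noncomputable def harmonicR (n : ℕ) : ℝ := ∑ i ∈ Finset.range n, (1 : ℝ) / (i + 1)

open Real

noncomputable def poissonWeight (x : ℝ) (k : ℕ) : ℝ := x ^ k * exp (-x) / Nat.factorial k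

section PoissonWeight

variable {x : ℝ}

lemma poissonWeight_nonneg (hx : 0 ≤ x) (k : ℕ) : 0 ≤ poissonWeight x k := by
  unfold poissonWeight; positivity

lemma succ_mul_poissonWeight_succ (k : ℕ) :
    ((k : ℝ) + 1) * poissonWeight x (k + 1) = x * poissonWeight x k := by
  unfold poissonWeight
  rw [Nat.factorial_succ, pow_succ]
  push_cast
  field_simp

lemma sq_mul_poissonWeight (k : ℕ) :
    x ^ 2 * poissonWeight x k = ((k : ℝ) + 1) * ((k : ℝ) + 2) * poissonWeight x (k + 2) := by
  have h₁ := succ_mul_poissonWeight_succ (x := x) k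
  have h₂ := succ_mul_poissonWeight_succ (x := x) (k + 1)
  push_cast at h₂
  linear_combination (-x) * h₁ - ((k : ℝ) + 1) * h₂

lemma hasSum_poissonWeight (x : ℝ) : HasSum (poissonWeight x) 1 := by
  have := (NormedSpace.expSeries_div_hasSum_exp x).mul_left (exp (-x))
  rw [← exp_eq_exp_ℝ, ← exp_add, neg_add_cancel, exp_zero] at this
  refine this.congr_fun fun k => ?_
  unfold poissonWeight; ring

lemma hasSum_poissonWeight_mul_natCast_mul {g : ℕ → ℝ} {s : ℝ}
    (h : HasSum (fun k => poissonWeight x k * g (k + 1)) s) :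
    HasSum (fun k => poissonWeight x k * (k * g k)) (x * s) := by
  refine (hasSum_nat_add_iff' 1).1 ?_
  simp only [Finset.range_one, Finset.sum_singleton, Nat.cast_zero, zero_mul, mul_zero, sub_zero]
  refine (h.mul_left x).congr_fun fun k => ?_
  push_cast
  rw [← mul_assoc x, ← succ_mul_poissonWeight_succ]; ring

lemma hasSum_poissonWeight_mul_natCast (x : ℝ) : HasSum (fun k => poissonWeight x k * k) x := by
  have := hasSum_poissonWeight_mul_natCast_mul (x := x) (g := fun _ => 1)
    (by simpa using hasSum_poissonWeight x)
  simpa using this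

lemma hasSum_poissonWeight_mul_sub_sq (x c : ℝ) :
    HasSum (fun k => poissonWeight x k * ((k : ℝ) - c) ^ 2) (x + (x - c) ^ 2) := by
  have h₂ : HasSum (fun k => poissonWeight x k * (k * ((k : ℝ) - 1))) (x * x) :=
    hasSum_poissonWeight_mul_natCast_mul (by simpa using hasSum_poissonWeight_mul_natCast x)
  convert (h₂.add ((hasSum_poissonWeight_mul_natCast x).mul_left (1 - 2 * c))).add
    ((hasSum_poissonWeight x).mul_left (c ^ 2)) using 1
  · ext k; ring
  · ring

lemma summable_poissonWeight_mul_sub_div_succ_sq_and_tsum_le (hx : 0 < x) :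
    Summable (fun k : ℕ => poissonWeight x k * ((x - k) / (k + 1)) ^ 2) ∧
      ∑' k : ℕ, poissonWeight x k * ((x - k) / (k + 1)) ^ 2 ≤ 2 * (x + 4) / x ^ 2 := by
  set q : ℕ → ℝ := fun j => poissonWeight x j * ((j : ℝ) - (x + 2)) ^ 2
  have hq : HasSum q (x + 4) := by
    convert hasSum_poissonWeight_mul_sub_sq x (x + 2) using 1; ring
  have hq₀ : ∀ j, 0 ≤ q j := fun j => mul_nonneg (poissonWeight_nonneg hx.le j) (sq_nonneg _)
  have hshift : Summable (fun k => q (k + 2)) := (summable_nat_add_iff 2).2 hq.summable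
  have hle : ∀ k : ℕ,
      poissonWeight x k * ((x - k) / (k + 1)) ^ 2 ≤ 2 / x ^ 2 * q (k + 2) := by
    intro k
    have hk : (0 : ℝ) < k + 1 := by positivity
    have hweight : poissonWeight x k = (k + 1) * (k + 2) * poissonWeight x (k + 2) / x ^ 2 := by
      rw [← sq_mul_poissonWeight]; field_simp
    calc poissonWeight x k * ((x - k) / (k + 1)) ^ 2
        = (k + 2) / (k + 1) * (q (k + 2) / x ^ 2) := by
          simp only [q, hweight]; push_cast; field_simp; ring
      _ ≤ 2 * (q (k + 2) / x ^ 2) := by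
          refine mul_le_mul_of_nonneg_right ?_ (div_nonneg (hq₀ _) (sq_nonneg x))
          rw [div_le_iff₀ hk]; linarith
      _ = 2 / x ^ 2 * q (k + 2) := by ring
  have hsum := Summable.of_nonneg_of_le
    (fun k => mul_nonneg (poissonWeight_nonneg hx.le k) (sq_nonneg _)) hle (hshift.mul_left _)
  refine ⟨hsum, ?_⟩
  calc ∑' k : ℕ, poissonWeight x k * ((x - k) / (k + 1)) ^ 2
      ≤ ∑' k : ℕ, 2 / x ^ 2 * q (k + 2) := hsum.tsum_le_tsum hle (hshift.mul_left _)
    _ ≤ 2 / x ^ 2 * (x + 4) := by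
        rw [tsum_mul_left, ← hq.tsum_eq]
        exact mul_le_mul_of_nonneg_left
          (tsum_comp_le_tsum_of_inj hq.summable hq₀ (add_left_injective 2)) (by positivity)
    _ = 2 * (x + 4) / x ^ 2 := by ring

end PoissonWeight

section WeightedSums

variable {ι : Type*} {p f : ι → ℝ}

lemma summable_mul_abs_of_summable_mul_sq (hp : ∀ i, 0 ≤ p i) (hps : Summable p)
    (hf : Summable fun i => p i * f i ^ 2) : Summable fun i => p i * |f i| := by
  refine Summable.of_nonneg_of_le (fun i => mul_nonneg (hp i) (abs_nonneg _)) (fun i => ?_)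
    ((hf.add hps).mul_left (1 / 2))
  have := two_mul_le_add_sq |f i| 1
  rw [sq_abs] at this
  nlinarith [hp i]

lemma tsum_mul_abs_le_sqrt_tsum_mul_sq (hp : ∀ i, 0 ≤ p i) (hp₁ : HasSum p 1)
    (hf : Summable fun i => p i * f i ^ 2) :
    ∑' i, p i * |f i| ≤ √(∑' i, p i * f i ^ 2) := by
  set S := ∑' i, p i * |f i|
  have hS : 0 ≤ S := tsum_nonneg fun i => mul_nonneg (hp i) (abs_nonneg _)
  have hsum := summable_mul_abs_of_summable_mul_sq hp hp₁.summable hf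
  -- AM-GM `2 S |f| ≤ f² + S²`, averaged against `p`.
  have h : 2 * S * S ≤ ∑' i, p i * f i ^ 2 + S ^ 2 * 1 :=
    hasSum_le (fun i => by nlinarith [hp i, two_mul_le_add_sq (|f i|) S, sq_abs (f i)])
      (hsum.hasSum.mul_left (2 * S)) (hf.hasSum.add (hp₁.mul_left (S ^ 2)))
  rw [Real.le_sqrt hS (tsum_nonneg fun i => mul_nonneg (hp i) (sq_nonneg _))]
  linarith

lemma abs_tsum_mul_sub_le_tsum_mul_abs_sub {g : ι → ℝ} {c : ℝ} (hp : ∀ i, 0 ≤ p i)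
    (hp₁ : HasSum p 1) (hg : Summable fun i => p i * |g i - c|) :
    |∑' i, p i * g i - c| ≤ ∑' i, p i * |g i - c| := by
  have hnorm : Summable fun i => ‖p i * (g i - c)‖ := by
    simpa only [Real.norm_eq_abs, abs_mul, abs_of_nonneg (hp _)] using hg
  have hsplit : HasSum (fun i => p i * g i) (∑' i, p i * (g i - c) + c * 1) :=
    (hnorm.of_norm.hasSum.add (hp₁.mul_left c)).congr_fun fun i => by ring
  rw [hsplit.tsum_eq, mul_one, add_sub_cancel_right, ← Real.norm_eq_abs]
  refine (norm_tsum_le_tsum_norm hnorm).trans_eq ?_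
  simp only [Real.norm_eq_abs, abs_mul, abs_of_nonneg (hp _)]

end WeightedSums

lemma harmonicR_eq_harmonic (n : ℕ) : harmonicR n = harmonic n := by
  simp [harmonicR, harmonic, one_div]

lemma harmonicR_mono : Monotone harmonicR := fun m n h =>
  Finset.sum_le_sum_of_subset_of_nonneg (Finset.range_subset_range.2 h) fun _ _ _ => by positivity

lemma harmonicR_sub_harmonicR_le {m n : ℕ} (h : m ≤ n) :
    harmonicR n - harmonicR m ≤ ((n : ℝ) - m) / (m + 1) := by
  rw [harmonicR, harmonicR, ← Finset.sum_Ico_eq_sub _ h]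
  calc ∑ i ∈ Finset.Ico m n, (1 : ℝ) / (i + 1)
      ≤ ∑ _i ∈ Finset.Ico m n, (1 : ℝ) / (m + 1) := by
        refine Finset.sum_le_sum fun i hi => ?_
        gcongr
        exact_mod_cast (Finset.mem_Ico.1 hi).1
    _ = ((n : ℝ) - m) / (m + 1) := by
        rw [Finset.sum_const, Nat.card_Ico, nsmul_eq_mul, Nat.cast_sub h]; ring

lemma abs_harmonicR_sub_harmonicR_le {k M : ℕ} (hM : 0 < M) :
    |harmonicR k - harmonicR M| ≤ |(k : ℝ) - M| / M + |(M : ℝ) - k| / (k + 1) := by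
  have hM' : (0 : ℝ) < M := by exact_mod_cast hM
  rcases le_total k M with h | h
  · have hkM : (k : ℝ) ≤ M := by exact_mod_cast h
    rw [abs_sub_comm, abs_of_nonneg (sub_nonneg.2 (harmonicR_mono h)),
      abs_of_nonneg (sub_nonneg.2 hkM)]
    have := harmonicR_sub_harmonicR_le h
    have : 0 ≤ |(k : ℝ) - M| / M := by positivity
    linarith
  · have hMk : (M : ℝ) ≤ k := by exact_mod_cast h
    rw [abs_of_nonneg (sub_nonneg.2 (harmonicR_mono h)), abs_of_nonneg (sub_nonneg.2 hMk)]
    have : ((k : ℝ) - M) / (M + 1) ≤ ((k : ℝ) - M) / M := by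
      gcongr
      linarith
    have := harmonicR_sub_harmonicR_le h
    have : 0 ≤ |(M : ℝ) - k| / (k + 1) := by positivity
    linarith

lemma abs_harmonicR_sub_log_add_eulerMascheroniConstant_le {M : ℕ} (hM : 0 < M) :
    |harmonicR M - (log M + eulerMascheroniConstant)| ≤ 1 / M := by
  have hM' : (0 : ℝ) < M := by exact_mod_cast hM
  have hupper := eulerMascheroniConstant_lt_eulerMascheroniSeq' M
  have hlower := eulerMascheroniSeq_lt_eulerMascheroniConstant M
  rw [eulerMascheroniSeq', if_neg hM.ne', ← harmonicR_eq_harmonic] at hupper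
  rw [eulerMascheroniSeq, ← harmonicR_eq_harmonic] at hlower
  have hlog : log (M + 1) - log M ≤ 1 / M := by
    rw [← log_div (by positivity) hM'.ne']
    have hdiv : ((M : ℝ) + 1) / M - 1 = 1 / M := by field_simp; ring
    linarith [log_le_sub_one_of_pos (show (0 : ℝ) < (M + 1) / M by positivity)]
  rw [abs_le]
  constructor <;> linarith

lemma abs_tsum_poissonWeight_mul_harmonicR_sub_harmonicR_le {M : ℕ} (hM : 0 < M) :
    |∑' k, poissonWeight M k * harmonicR k - harmonicR M| ≤ (1 + √17) / √M := by
  have hM₀ : (0 : ℝ) < M := by exact_mod_cast hM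
  have hM₁ : (1 : ℝ) ≤ M := by exact_mod_cast hM
  set p := poissonWeight M
  have hp := poissonWeight_nonneg hM₀.le
  have hp₁ := hasSum_poissonWeight (M : ℝ)
  set f₁ : ℕ → ℝ := fun k => (k - M) / M
  set f₂ : ℕ → ℝ := fun k => (M - k) / (k + 1)
  have hf₁ : HasSum (fun k => p k * f₁ k ^ 2) (1 / M) := by
    have h := ((hasSum_poissonWeight_mul_sub_sq (M : ℝ) M).div_const ((M : ℝ) ^ 2)).congr_fun
      fun k => show p k * f₁ k ^ 2 = _ by ring
    rwa [sub_self, zero_pow two_ne_zero, add_zero, sq, div_mul_cancel_right₀ hM₀.ne',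
      ← one_div] at h
  obtain ⟨hf₂, hf₂_le⟩ := summable_poissonWeight_mul_sub_div_succ_sq_and_tsum_le hM₀
  have hf₂_le' : ∑' k, p k * f₂ k ^ 2 ≤ 17 / M :=
    hf₂_le.trans (by rw [div_le_div_iff₀ (by positivity) hM₀]; nlinarith)
  have hpt : ∀ k, p k * |harmonicR k - harmonicR M| ≤ p k * |f₁ k| + p k * |f₂ k| := by
    intro k
    rw [← mul_add]
    refine mul_le_mul_of_nonneg_left ?_ (hp k)
    have hk : (0 : ℝ) < k + 1 := by positivity
    simpa only [f₁, f₂, abs_div, abs_of_pos hM₀, abs_of_pos hk]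
      using abs_harmonicR_sub_harmonicR_le (k := k) hM
  have hs₁ := summable_mul_abs_of_summable_mul_sq hp hp₁.summable hf₁.summable
  have hs₂ := summable_mul_abs_of_summable_mul_sq hp hp₁.summable hf₂
  have hs :=
    Summable.of_nonneg_of_le (fun k => mul_nonneg (hp k) (abs_nonneg _)) hpt (hs₁.add hs₂)
  calc |∑' k, p k * harmonicR k - harmonicR M| ≤ ∑' k, p k * |harmonicR k - harmonicR M| :=
        abs_tsum_mul_sub_le_tsum_mul_abs_sub hp hp₁ hs
    _ ≤ ∑' k, p k * |f₁ k| + ∑' k, p k * |f₂ k| := by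
        rw [← hs₁.tsum_add hs₂]
        exact hs.tsum_le_tsum hpt (hs₁.add hs₂)
    _ ≤ √(1 / M) + √(17 / M) := by
        gcongr
        · exact (tsum_mul_abs_le_sqrt_tsum_mul_sq hp hp₁ hf₁.summable).trans_eq
            (by rw [hf₁.tsum_eq])
        · exact (tsum_mul_abs_le_sqrt_tsum_mul_sq hp hp₁ hf₂).trans (sqrt_le_sqrt hf₂_le')
    _ = (1 + √17) / √M := by rw [sqrt_div' _ hM₀.le, sqrt_div' _ hM₀.le, sqrt_one]; ring

/-- For a Poisson random variable `Y` with integer mean `M ≥ 1`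
(so `P(Y = k) = M^k e^{-M}/k!`), `|E H_Y - H_M| ≤ (1 + √17) M^{-1/2}`; consequently
`E H_Y = log M + γ + O(M^{-1/2})` with `γ` the Euler–Mascheroni constant. -/
theorem poisson_harmonic_expectation :
    (∀ M : ℕ, 1 ≤ M →
      |(∑' k : ℕ, ((M : ℝ) ^ k * Real.exp (-(M : ℝ)) / Nat.factorial k) * harmonicR k)
          - harmonicR M| ≤ (1 + Real.sqrt 17) / Real.sqrt M) ∧
    ∃ C > 0, ∀ M : ℕ, 1 ≤ M →
      |(∑' k : ℕ, ((M : ℝ) ^ k * Real.exp (-(M : ℝ)) / Nat.factorial k) * harmonicR k)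
          - (Real.log M + Real.eulerMascheroniConstant)| ≤ C / Real.sqrt M := by
  refine ⟨fun M hM => abs_tsum_poissonWeight_mul_harmonicR_sub_harmonicR_le hM,
    2 + √17, by positivity, fun M hM => ?_⟩
  have hM₁ : (1 : ℝ) ≤ M := by exact_mod_cast hM
  have hlog : 1 / (M : ℝ) ≤ 1 / √M := by
    gcongr
    exact sqrt_le_self_iff.2 (Or.inr hM₁)
  calc _ ≤ |∑' k, poissonWeight M k * harmonicR k - harmonicR M|
        + |harmonicR M - (log M + eulerMascheroniConstant)| := abs_sub_le _ _ _
    _ ≤ (1 + √17) / √M + 1 / √M := add_le_add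
        (abs_tsum_poissonWeight_mul_harmonicR_sub_harmonicR_le hM)
        ((abs_harmonicR_sub_log_add_eulerMascheroniConstant_le hM).trans hlog)
    _ = (2 + √17) / √M := by ring
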